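/- The set of 35 rules for the doubler, the structure which transforms a simple locomotive into a double one (Table 17 of the paper, rules 143–177), is rotation-consistent. The rules are: (W,WBWBBWBBWB,W), (W,WWBWBBBBWW,W), (W,WBRWBBWBBW,R), (B,WBWWBWWWBW,B), (W,BWWWBWBWWW,W), (W,BBWWWBWWWW,W), (B,WWWWBBWWWW,B), (B,WBWBWWBWWR,B), (B,BBWWWWWWWW,B), (W,BWWWWBBWWW,W), (W,WBWBBRBBWB,W), (W,WRBWBBBBWW,R), (R,WBWWBBWBBW,W), (B,WBWBRWBWWW,B), (W,RBWBBWBBWB,R), (R,WWBWBBBBWW,W), (W,RBWWBBWBBW,W), (B,WBWWBWRWBW,B), (B,WBWBWRBWWW,B), (R,WBWBBWBBWB,R), (W,RWBWBBBBWW,W), (W,WBWWBBRBBW,W), (B,RBWWBWWWBW,W), (B,RWWWBBWWWW,B), (B,RBWBWWBWWW,B), (B,BBWWWWRWWW,B), (R,WWRBBWBBWB,W), (W,RBWWBRWWBW,B), (R,RBWBWBWBWW,R), (B,RWWWBBRWWW,B), (W,WBRBBWBBWB,W), (W,WBWWBBWBBW,W), (B,WBWWBRWWBW,B), (B,WWWWBBRWWW,B),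 (B,WBWBWWBWWW,B). -/

import Mathlib

/-- The three states of the cellular automaton: W (white, quiescent),
B (blue) and R (red). -/
inductive CAState : Type
  | W | B | R
  deriving DecidableEq, Repr

open CAState

/-- A neighbourhood: a word of length 10 over {W,B,R}; positions 0-4
(paper's 1-5) are the side-neighbours, positions 5-9 (paper's 6-10)
the vertex-neighbours. -/
abbrev Nbhd := Fin 10 → CAState

/-- Build a neighbourhood from its ten letters. -/
def nb (a b c d e f g h i j : CAState) : Nbhd := ![a, b, c, d, e, f, g, h, i, j]

/-- The rotation ρ: simultaneous cyclic shift of the side part and of the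
vertex part: ρ(x1…x10) = x2x3x4x5x1x7x8x9x10x6. -/
def rho (n : Nbhd) : Nbhd := fun i => n (![1, 2, 3, 4, 0, 6, 7, 8, 9, 5] i)

/-- Two neighbourhoods are rotation-equivalent if one is ρ^k of the other. -/
def RotEquiv (n m : Nbhd) : Prop := ∃ k : ℕ, n = rho^[k] m

/-- A rule: (current state, neighbourhood, new state). -/
abbrev Rule := CAState × Nbhd × CAState

/-- A set of rules is rotation-consistent if any two rules with the same
current state and rotation-equivalent neighbourhoods have the same new
state. -/
def RotationConsistent (L : List Rule) : Prop :=
  ∀ r₁ ∈ L, ∀ r₂ ∈ L, r₁.1 = r₂.1 → RotEquiv r₁.2.1 r₂.2.1 → r₁.2.2 = r₂.2.2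

/-!
Since `ρ⁵ = id`, rotation-equivalence only needs the exponents `k < 5`. This makes
rotation-consistency of a finite list of rules decidable, and for the 35 rules of the
doubler it is checked by evaluation.
-/

lemma rho_isPeriodicPt_five (n : Nbhd) : Function.IsPeriodicPt rho 5 n := by
  funext i
  fin_cases i <;> rfl

lemma rotEquiv_iff_exists_lt_five {n m : Nbhd} : RotEquiv n m ↔ ∃ k < 5, n = rho^[k] m :=
  ⟨fun ⟨k, hk⟩ => ⟨k % 5, Nat.mod_lt _ (by norm_num),
      hk.trans ((rho_isPeriodicPt_five m).iterate_mod_apply k).symm⟩,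
    fun ⟨k, _, hk⟩ => ⟨k, hk⟩⟩

instance : DecidableRel RotEquiv := fun _ _ =>
  decidable_of_iff _ rotEquiv_iff_exists_lt_five.symm

instance (L : List Rule) : Decidable (RotationConsistent L) :=
  inferInstanceAs (Decidable (∀ r₁ ∈ L, ∀ r₂ ∈ L, r₁.1 = r₂.1 → RotEquiv r₁.2.1 r₂.2.1 → _))

theorem doubler_rules_rotation_consistent :
    RotationConsistent [
    (W, nb W B W B B W B B W B, W),
    (W, nb W W B W B B B B W W, W),
    (W, nb W B R W B B W B B W, R),
    (B, nb W B W W B W W W B W, B),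
    (W, nb B W W W B W B W W W, W),
    (W, nb B B W W W B W W W W, W),
    (B, nb W W W W B B W W W W, B),
    (B, nb W B W B W W B W W R, B),
    (B, nb B B W W W W W W W W, B),
    (W, nb B W W W W B B W W W, W),
    (W, nb W B W B B R B B W B, W),
    (W, nb W R B W B B B B W W, R),
    (R, nb W B W W B B W B B W, W),
    (B, nb W B W B R W B W W W, B),
    (W, nb R B W B B W B B W B, R),
    (R, nb W W B W B B B B W W, W),
    (W, nb R B W W B B W B B W, W),
    (B, nb W B W W B W R W B W, B),
    (B, nb W B W B W R B W W W, B),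
    (R, nb W B W B B W B B W B, R),
    (W, nb R W B W B B B B W W, W),
    (W, nb W B W W B B R B B W, W),
    (B, nb R B W W B W W W B W, W),
    (B, nb R W W W B B W W W W, B),
    (B, nb R B W B W W B W W W, B),
    (B, nb B B W W W W R W W W, B),
    (R, nb W W R B B W B B W B, W),
    (W, nb R B W W B R W W B W, B),
    (R, nb R B W B W B W B W W, R),
    (B, nb R W W W B B R W W W, B),
    (W, nb W B R B B W B B W B, W),
    (W, nb W B W W B B W B B W, W),
    (B, nb W B W W B R W W B W, B),
    (B, nb W W W W B B R W W W, B),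
    (B, nb W B W B W W B W W W, B)] := by
  decide
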